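/- arXiv:1911.06141 — 10 statements merged into one kernel-verified Lean document; each statement's English description precedes it below -/
import Mathlib

section
/- Let (R,m) be a Noetherian local ring with residue field k and E = E(k) the injective hull of k, and M° = Hom_R(M,E) the Matlis dual. Then an R-module M is prime if and only if M° is coprime. -/
/-!
Multiplication by `r` on `M° = Hom_R(M, E)` is the dual of multiplication by `r` on `M`, since
`r • g = g ∘ (r • ·)`. Injectivity of `E` makes the dual of an injective map surjective. Conversely,
`E` cogenerates every module: a nonzero `x` spans a cyclic module `R ⧸ ann x` with `ann x ⊆ m`,
which maps onto `k ⊆ E`, and this map extends to `M`. Hence a map whose dual is surjective (or zero)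
is itself injective (or zero), and both conditions of primeness dualize exactly to those of
coprimeness.
-/

universe u v

open Function

def IsPrimeModule (R M : Type*) [CommRing R] [AddCommGroup M] [Module R M] : Prop :=
  (∃ x : M, x ≠ 0) ∧ ∀ r : R, (∀ x : M, r • x = 0) ∨ Injective (fun x : M => r • x)

def IsCoprimeModule (R N : Type*) [CommRing R] [AddCommGroup N] [Module R N] : Prop :=
  (∃ y : N, y ≠ 0) ∧ ∀ r : R, (∀ y : N, r • y = 0) ∨ Surjective (fun y : N => r • y)

theorem IsLocalRing.exists_linearMap_apply_ne_zero {R : Type u} [CommRing R] [IsLocalRing R]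
    {E M : Type v} [AddCommGroup E] [Module R E] [Module.Injective R E]
    [AddCommGroup M] [Module R M] {ι : ResidueField R →ₗ[R] E} (hι : Injective ι)
    {x : M} (hx : x ≠ 0) : ∃ f : M →ₗ[R] E, f x ≠ 0 := by
  let ψ : R →ₗ[R] E := ι ∘ₗ Algebra.linearMap R (ResidueField R)
  have hle : Ideal.torsionOf R M x ≤ LinearMap.ker ψ := fun r hr => by
    have hr_max : r ∈ maximalIdeal R :=
      le_maximalIdeal (by rwa [Ne, Ideal.torsionOf_eq_top_iff]) hr
    simp [ψ, (residue_eq_zero_iff r).2 hr_max]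
  let e := Ideal.quotTorsionOfEquivSpanSingleton R M x
  let g : (R ∙ x) →ₗ[R] E := (Ideal.torsionOf R M x).liftQ ψ hle ∘ₗ e.symm.toLinearMap
  obtain ⟨f, hf⟩ := Module.Injective.out (R ∙ x).subtype (Submodule.injective_subtype _) g
  have he : e.symm ⟨x, Submodule.mem_span_singleton_self x⟩ = Submodule.Quotient.mk 1 := by
    rw [LinearEquiv.symm_apply_eq, Ideal.quotTorsionOfEquivSpanSingleton_apply_mk, one_smul]
  refine ⟨f, fun hfx => one_ne_zero (hι ?_ : (1 : ResidueField R) = 0)⟩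
  have := hf ⟨x, Submodule.mem_span_singleton_self x⟩
  simp only [Submodule.subtype_apply, hfx, g, LinearMap.comp_apply, LinearEquiv.coe_coe, he,
    Submodule.liftQ_apply, ψ, Algebra.linearMap_apply, map_one] at this
  rw [← this, map_zero]

namespace LinearMap

variable {R : Type u} [CommRing R] {E M N : Type v} [AddCommGroup E] [Module R E]
  [AddCommGroup M] [Module R M] [AddCommGroup N] [Module R N]

theorem surjective_comp_right_of_injective [Module.Injective R E] {f : M →ₗ[R] N}
    (hf : Injective f) : Surjective fun g : N →ₗ[R] E => g ∘ₗ f := fun g =>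
  let ⟨h, hh⟩ := Module.Injective.out f hf g
  ⟨h, ext hh⟩

theorem injective_of_surjective_comp_right
    (hE : ∀ x : M, x ≠ 0 → ∃ g : M →ₗ[R] E, g x ≠ 0) {f : M →ₗ[R] N}
    (hf : Surjective fun g : N →ₗ[R] E => g ∘ₗ f) : Injective f := by
  refine (injective_iff_map_eq_zero f).2 fun x hx => by_contra fun hne => ?_
  obtain ⟨g, hg⟩ := hE x hne
  obtain ⟨h, rfl⟩ := hf g
  exact hg (by simp [hx])

theorem eq_zero_of_forall_comp_eq_zero
    (hE : ∀ y : N, y ≠ 0 → ∃ g : N →ₗ[R] E, g y ≠ 0) {f : M →ₗ[R] N}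
    (hf : ∀ g : N →ₗ[R] E, g ∘ₗ f = 0) : f = 0 :=
  ext fun x => by_contra fun hne =>
    let ⟨g, hg⟩ := hE (f x) hne
    hg (congr($(hf g) x))

theorem comp_lsmul (g : M →ₗ[R] E) (r : R) : g ∘ₗ lsmul R M r = r • g :=
  ext fun x => map_smul g r x

end LinearMap

section Dual

variable {R : Type u} [CommRing R] {E M : Type v} [AddCommGroup E] [Module R E]
  [AddCommGroup M] [Module R M]

theorem exists_ne_zero_iff_exists_linearMap_ne_zero
    (hE : ∀ x : M, x ≠ 0 → ∃ g : M →ₗ[R] E, g x ≠ 0) :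
    (∃ x : M, x ≠ 0) ↔ ∃ g : M →ₗ[R] E, g ≠ 0 := by
  refine ⟨fun ⟨x, hx⟩ => ?_, fun ⟨g, hg⟩ => ?_⟩
  · obtain ⟨g, hg⟩ := hE x hx
    exact ⟨g, fun h => hg (by simp [h])⟩
  · obtain ⟨x, hx⟩ := DFunLike.ne_iff.1 hg
    exact ⟨x, fun h => hx (by simp [h])⟩

theorem smul_eq_zero_iff_smul_linearMap_eq_zero
    (hE : ∀ x : M, x ≠ 0 → ∃ g : M →ₗ[R] E, g x ≠ 0) (r : R) :
    (∀ x : M, r • x = 0) ↔ ∀ g : M →ₗ[R] E, r • g = 0 := by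
  refine ⟨fun h g => ?_, fun h x => ?_⟩
  · rw [← g.comp_lsmul, show LinearMap.lsmul R M r = 0 from LinearMap.ext h, LinearMap.comp_zero]
  · have := LinearMap.eq_zero_of_forall_comp_eq_zero hE fun g => (g.comp_lsmul r).trans (h g)
    exact congr($this x)

theorem injective_smul_iff_surjective_smul_linearMap [Module.Injective R E]
    (hE : ∀ x : M, x ≠ 0 → ∃ g : M →ₗ[R] E, g x ≠ 0) (r : R) :
    Injective (fun x : M => r • x) ↔ Surjective (fun g : M →ₗ[R] E => r • g) := by
  simp only [← LinearMap.comp_lsmul]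
  exact ⟨LinearMap.surjective_comp_right_of_injective (f := LinearMap.lsmul R M r),
    LinearMap.injective_of_surjective_comp_right hE⟩

theorem isPrimeModule_iff_isCoprimeModule_linearMap [Module.Injective R E]
    (hE : ∀ x : M, x ≠ 0 → ∃ g : M →ₗ[R] E, g x ≠ 0) :
    IsPrimeModule R M ↔ IsCoprimeModule R (M →ₗ[R] E) :=
  and_congr (exists_ne_zero_iff_exists_linearMap_ne_zero hE) <| forall_congr' fun r =>
    or_congr (smul_eq_zero_iff_smul_linearMap_eq_zero hE r)
      (injective_smul_iff_surjective_smul_linearMap hE r)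

end Dual

theorem stmt3_general (R : Type) [CommRing R] [IsLocalRing R]
    (E : Type) [AddCommGroup E] [Module R E] [Module.Injective R E]
    (ι : IsLocalRing.ResidueField R →ₗ[R] E) (hι : Function.Injective ι)
    (M : Type) [AddCommGroup M] [Module R M] :
    ((∃ x : M, x ≠ 0) ∧
      ∀ r : R, (∀ x : M, r • x = 0) ∨ Function.Injective (fun x : M => r • x)) ↔
    ((∃ f : M →ₗ[R] E, f ≠ 0) ∧
      ∀ r : R, (∀ f : M →ₗ[R] E, r • f = 0) ∨
        Function.Surjective (fun f : M →ₗ[R] E => r • f)) :=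
  isPrimeModule_iff_isCoprimeModule_linearMap fun _ hx =>
    IsLocalRing.exists_linearMap_apply_ne_zero hι hx

/-- Let `(R, m)` be a Noetherian local ring with residue field `k`, and let `E` be
the injective hull of `k` (an injective module containing `k = R/m` as an essential
submodule).  For an `R`-module `M`, let `M° = Hom_R(M, E)` be the Matlis dual.
Then `M` is prime iff `M°` is coprime. -/
theorem stmt3 (R : Type) [CommRing R] [IsNoetherianRing R] [IsLocalRing R]
    (E : Type) [AddCommGroup E] [Module R E] [Module.Injective R E]
    (ι : IsLocalRing.ResidueField R →ₗ[R] E) (hι : Function.Injective ι)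
    (hess : ∀ U : Submodule R E, U ≠ ⊥ → U ⊓ LinearMap.range ι ≠ ⊥)
    (M : Type) [AddCommGroup M] [Module R M] :
    ((∃ x : M, x ≠ 0) ∧
      ∀ r : R, (∀ x : M, r • x = 0) ∨ Function.Injective (fun x : M => r • x)) ↔
    ((∃ f : M →ₗ[R] E, f ≠ 0) ∧
      ∀ r : R, (∀ f : M →ₗ[R] E, r • f = 0) ∨
        Function.Surjective (fun f : M →ₗ[R] E => r • f)) :=
  stmt3_general R E ι hι M
end

section
/- Let R be a Noetherian local ring and q a prime ideal such that R_q is a domain. Then p = Ann_R(R_q) is an associated prime of R. -/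
/-!
The annihilator of `R_q` is the kernel `p` of `R → R_q`, a prime ideal because `R_q` is a domain.
Every element of `p` is killed by some element outside `q`, and `p` is finitely generated, so a
single `s ∉ q` (a product over generators) kills all of `p`. Conversely `s * x = 0` with `s ∉ q`
forces `x ∈ p`; hence `p = Ann(s)`.
-/

theorem Submodule.FG.exists_mem_annihilator_of_forall_exists_smul_eq_zero {R M : Type*}
    [CommSemiring R] [AddCommMonoid M] [Module R M] {S : Submonoid R} {N : Submodule R M}
    (hN : N.FG) (h : ∀ x ∈ N, ∃ s ∈ S, s • x = 0) : ∃ s ∈ S, s ∈ N.annihilator := by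
  obtain ⟨T, rfl⟩ := hN
  choose f hfS hf using fun x : T ↦ h x (Submodule.subset_span x.2)
  refine ⟨∏ x ∈ T.attach, f x, S.prod_mem fun x _ ↦ hfS x, ?_⟩
  rw [Submodule.mem_annihilator_span]
  intro x
  obtain ⟨c, hc⟩ := Finset.dvd_prod_of_mem f (Finset.mem_attach T x)
  rw [hc, mul_comm, mul_smul, hf, smul_zero]

theorem Module.annihilator_eq_ker_algebraMap (R A : Type*) [CommSemiring R] [Semiring A]
    [Algebra R A] : Module.annihilator R A = RingHom.ker (algebraMap R A) := by
  ext r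
  simp only [Module.mem_annihilator, Algebra.smul_def, RingHom.mem_ker]
  exact ⟨fun h ↦ by simpa using h 1, fun h m ↦ by rw [h, zero_mul]⟩

theorem IsLocalization.exists_ker_algebraMap_eq_colon {R : Type*} [CommSemiring R]
    [IsNoetherianRing R] (M : Submonoid R) (S : Type*) [CommSemiring S] [Algebra R S]
    [IsLocalization M S] :
    ∃ s ∈ M, RingHom.ker (algebraMap R S) = (⊥ : Submodule R R).colon {s} := by
  have hker (x : R) : x ∈ RingHom.ker (algebraMap R S) ↔ ∃ s ∈ M, s * x = 0 := by
    simp [RingHom.mem_ker, IsLocalization.map_eq_zero_iff M S]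
  obtain ⟨s, hsM, hs⟩ := (IsNoetherian.noetherian (RingHom.ker (algebraMap R S)))
    |>.exists_mem_annihilator_of_forall_exists_smul_eq_zero fun x hx ↦ (hker x).mp hx
  refine ⟨s, hsM, le_antisymm (fun x hx ↦ ?_) fun x hx ↦ (hker x).mpr ⟨s, hsM, ?_⟩⟩
  · rw [Submodule.mem_colon_singleton, Submodule.mem_bot, smul_eq_mul, mul_comm]
    exact Submodule.mem_annihilator.mp hs x hx
  · simpa [Submodule.mem_colon_singleton, mul_comm] using hx

theorem IsLocalization.isAssociatedPrime_ker_algebraMap {R : Type*} [CommSemiring R]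
    [IsNoetherianRing R] (M : Submonoid R) (S : Type*) [CommSemiring S] [IsDomain S]
    [Algebra R S] [IsLocalization M S] : IsAssociatedPrime (RingHom.ker (algebraMap R S)) R := by
  obtain ⟨s, -, hs⟩ := exists_ker_algebraMap_eq_colon M S
  exact isAssociatedPrime_iff.mpr ⟨RingHom.ker_isPrime _, s, hs⟩

theorem stmt6_general (R : Type) [CommRing R] [IsNoetherianRing R]
    (q : Ideal R) [q.IsPrime] [IsDomain (Localization.AtPrime q)] :
    IsAssociatedPrime (Module.annihilator R (Localization.AtPrime q)) R := by
  rw [Module.annihilator_eq_ker_algebraMap]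
  exact IsLocalization.isAssociatedPrime_ker_algebraMap q.primeCompl _

/-- Let `R` be a Noetherian local ring and `q` a prime ideal such that `R_q` is a
domain.  Then `p = Ann_R(R_q)` is an associated prime of `R`. -/
theorem stmt6 (R : Type) [CommRing R] [IsNoetherianRing R] [IsLocalRing R]
    (q : Ideal R) [q.IsPrime] [IsDomain (Localization.AtPrime q)] :
    IsAssociatedPrime (Module.annihilator R (Localization.AtPrime q)) R :=
  stmt6_general R q
end

section
/- Let R be a Noetherian local ring. If M is a simple torsion-free R-module, then for every nonzero submodule U ⊆ M, the quotient M/U is a torsion module and U is again simple torsion-free. -/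
/-!
Let `T ⊇ U` be the preimage in `M` of the torsion submodule of `M/U`. Then `M/T` is torsion-free
and `T ≠ 0`, so simplicity forces `T = M`, i.e. `M/U` is torsion. For a nonzero `V ≤ U`, the
quotient `U/V` embeds in the torsion module `M/V`, so it is torsion; if it were also torsion-free
it would vanish, i.e. `V = U`.
-/

/-- A module is torsion-free if no nonzero element is annihilated by a
non-zerodivisor of `R`. -/
def IsTorsionFreeMod (R M : Type) [CommRing R] [AddCommGroup M] [Module R M] : Prop :=
  ∀ (r : R) (x : M), r ∈ nonZeroDivisors R → r • x = 0 → x = 0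

/-- A module is torsion if every element is annihilated by some non-zerodivisor. -/
def IsTorsionMod (R M : Type) [CommRing R] [AddCommGroup M] [Module R M] : Prop :=
  ∀ x : M, ∃ r ∈ nonZeroDivisors R, r • x = 0

/-- `M` is simple torsion-free if `M ≠ 0` is torsion-free and no proper quotient
`M/U` with `U ≠ 0` is torsion-free. -/
def SimpleTorsionFree (R M : Type) [CommRing R] [AddCommGroup M] [Module R M] : Prop :=
  (∃ x : M, x ≠ 0) ∧ IsTorsionFreeMod R M ∧
    ∀ U : Submodule R M, U ≠ ⊥ → U ≠ ⊤ → ¬ IsTorsionFreeMod R (M ⧸ U)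

variable {R M : Type} [CommRing R] [AddCommGroup M] [Module R M]

theorem IsTorsionMod.eq_zero_of_isTorsionFreeMod (ht : IsTorsionMod R M)
    (htf : IsTorsionFreeMod R M) (x : M) : x = 0 := by
  obtain ⟨r, hr, hrx⟩ := ht x
  exact htf r x hr hrx

theorem IsTorsionFreeMod.submodule (hM : IsTorsionFreeMod R M) (U : Submodule R M) :
    IsTorsionFreeMod R U := fun r u hr hru =>
  Subtype.ext (hM r u hr (congrArg Subtype.val hru))

theorem IsTorsionMod.quotient_comap_subtype {W : Submodule R M} (hW : IsTorsionMod R (M ⧸ W))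
    (U : Submodule R M) : IsTorsionMod R (U ⧸ W.comap U.subtype) := by
  intro y
  obtain ⟨u, rfl⟩ := Submodule.Quotient.mk_surjective _ y
  obtain ⟨r, hr, hru⟩ := hW (Submodule.Quotient.mk (u : M))
  rw [← Submodule.Quotient.mk_smul, Submodule.Quotient.mk_eq_zero] at hru
  exact ⟨r, hr, by rwa [← Submodule.Quotient.mk_smul, Submodule.Quotient.mk_eq_zero]⟩

theorem isTorsionFreeMod_quotient_comap_torsion (U : Submodule R M) :
    IsTorsionFreeMod R (M ⧸ (Submodule.torsion R (M ⧸ U)).comap U.mkQ) := by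
  intro r y hr hry
  obtain ⟨x, rfl⟩ := Submodule.Quotient.mk_surjective _ y
  rw [← Submodule.Quotient.mk_smul, Submodule.Quotient.mk_eq_zero] at hry
  rw [Submodule.Quotient.mk_eq_zero]
  simp only [Submodule.mem_comap, Submodule.mkQ_apply, Submodule.mem_torsion_iff] at hry ⊢
  obtain ⟨s, hs⟩ := hry
  exact ⟨s * ⟨r, hr⟩, by rwa [mul_smul, Submonoid.mk_smul, ← Submodule.Quotient.mk_smul]⟩

theorem SimpleTorsionFree.isTorsionMod_quotient (hM : SimpleTorsionFree R M)
    {U : Submodule R M} (hU : U ≠ ⊥) : IsTorsionMod R (M ⧸ U) := by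
  set T := (Submodule.torsion R (M ⧸ U)).comap U.mkQ
  have hUT : U ≤ T := fun x hx => by
    simp [T, (Submodule.Quotient.mk_eq_zero U).mpr hx]
  have hT : T = ⊤ := by
    by_contra hT
    exact hM.2.2 T (ne_bot_of_le_ne_bot hU hUT) hT (isTorsionFreeMod_quotient_comap_torsion U)
  intro y
  obtain ⟨x, rfl⟩ := Submodule.Quotient.mk_surjective _ y
  obtain ⟨r, hr⟩ := (Submodule.mem_torsion_iff _).mp (hT ▸ Submodule.mem_top : x ∈ T)
  exact ⟨r, r.2, hr⟩

theorem SimpleTorsionFree.submodule (hM : SimpleTorsionFree R M) {U : Submodule R M}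
    (hU : U ≠ ⊥) : SimpleTorsionFree R U := by
  refine ⟨?_, hM.2.1.submodule U, fun V hV hVU hVtf => hVU ?_⟩
  · obtain ⟨x, hxU, hx⟩ := (Submodule.ne_bot_iff U).mp hU
    exact ⟨⟨x, hxU⟩, by simpa using hx⟩
  have hVM : V.map U.subtype ≠ ⊥ := by
    rwa [Ne, ← Submodule.map_bot U.subtype,
      (Submodule.map_injective_of_injective U.injective_subtype).eq_iff]
  have hVt : IsTorsionMod R (U ⧸ V) := by
    have := (hM.isTorsionMod_quotient hVM).quotient_comap_subtype U
    rwa [Submodule.comap_map_eq_of_injective U.injective_subtype] at this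
  rw [eq_top_iff]
  intro u _
  exact (Submodule.Quotient.mk_eq_zero V).mp (hVt.eq_zero_of_isTorsionFreeMod hVtf _)

theorem stmt7_general (R : Type) [CommRing R]
    (M : Type) [AddCommGroup M] [Module R M] (hM : SimpleTorsionFree R M)
    (U : Submodule R M) (hU : U ≠ ⊥) :
    IsTorsionMod R (M ⧸ U) ∧ SimpleTorsionFree R U :=
  ⟨hM.isTorsionMod_quotient hU, hM.submodule hU⟩

/-- If `M` is a simple torsion-free module over a Noetherian local ring, then for
every nonzero submodule `U` the quotient `M/U` is torsion and `U` is again simple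
torsion-free. -/
theorem stmt7 (R : Type) [CommRing R] [IsNoetherianRing R] [IsLocalRing R]
    (M : Type) [AddCommGroup M] [Module R M] (hM : SimpleTorsionFree R M)
    (U : Submodule R M) (hU : U ≠ ⊥) :
    IsTorsionMod R (M ⧸ U) ∧ SimpleTorsionFree R U :=
  stmt7_general R M hM U hU
end

section
/- Let R be a Noetherian local ring. Every simple torsion-free R-module is uniform. -/
/-!
If `U ⊓ V = 0` with `U, V ≠ 0`, enlarge `U` by Zorn to a submodule `W` maximal with
`W ⊓ V = 0`. Then `M/W` is torsion-free: if `r • x ∈ W` with `r` a non-zerodivisor and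
`x ∉ W`, then `W + Rx` meets `V` in some `v ≠ 0`, and `r • v ∈ W ⊓ V = 0` contradicts
torsion-freeness of `M`. Since `0 ≠ U ≤ W` and `W ≠ M` (as `V ≠ 0`), this contradicts
simplicity.
-/

theorem exists_le_maximal_disjoint {α : Type*} [CompleteLattice α] [IsCompactlyGenerated α]
    {a b : α} (h : Disjoint a b) : ∃ m, a ≤ m ∧ Maximal (Disjoint · b) m :=
  zorn_le_nonempty₀ {x | Disjoint x b}
    (fun _ hcs hc _ _ ↦ ⟨_, hc.directedOn.disjoint_sSup_left.2 hcs, fun _ ↦ le_sSup⟩) a h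

section TorsionFree

variable {R M : Type} [CommRing R] [AddCommGroup M] [Module R M]

theorem Submodule.smul_mem_of_mem_sup_span_singleton {W : Submodule R M} {r : R} {x v : M}
    (hrx : r • x ∈ W) (hv : v ∈ W ⊔ R ∙ x) : r • v ∈ W := by
  obtain ⟨w, hw, _, hy, rfl⟩ := Submodule.mem_sup.1 hv
  obtain ⟨a, rfl⟩ := Submodule.mem_span_singleton.1 hy
  rw [smul_add, smul_comm r a x]
  exact W.add_mem (W.smul_mem r hw) (W.smul_mem a hrx)

theorem isTorsionFreeMod_quotient_of_maximal_disjoint (hM : IsTorsionFreeMod R M)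
    {V W : Submodule R M} (hW : Maximal (Disjoint · V) W) : IsTorsionFreeMod R (M ⧸ W) := by
  intro r xb hr hrx
  obtain ⟨x, rfl⟩ := Submodule.Quotient.mk_surjective W xb
  rw [← Submodule.Quotient.mk_smul, Submodule.Quotient.mk_eq_zero] at hrx
  rw [Submodule.Quotient.mk_eq_zero]
  by_contra hxW
  have hmeet : ¬ Disjoint (W ⊔ R ∙ x) V := fun h ↦
    hxW (hW.2 h le_sup_left (Submodule.mem_sup_right (Submodule.mem_span_singleton_self x)))
  obtain ⟨v, ⟨hvW, hvV⟩, hv0⟩ :=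
    Submodule.exists_mem_ne_zero_of_ne_bot (mt disjoint_iff.2 hmeet)
  have hrv : r • v ∈ W ⊓ V :=
    ⟨Submodule.smul_mem_of_mem_sup_span_singleton hrx hvW, V.smul_mem r hvV⟩
  rw [disjoint_iff.1 hW.1, Submodule.mem_bot] at hrv
  exact hv0 (hM r v hr hrv)

end TorsionFree

theorem stmt8_general (R : Type) [CommRing R]
    (M : Type) [AddCommGroup M] [Module R M] (hM : SimpleTorsionFree R M)
    (U V : Submodule R M) (hU : U ≠ ⊥) (hV : V ≠ ⊥) :
    U ⊓ V ≠ ⊥ := by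
  intro hUV
  obtain ⟨W, hUW, hW⟩ := exists_le_maximal_disjoint (disjoint_iff.2 hUV)
  have hW_ne_bot : W ≠ ⊥ := ne_bot_of_le_ne_bot hU hUW
  have hW_ne_top : W ≠ ⊤ := by
    rintro rfl
    exact hV (top_disjoint.1 hW.1)
  exact hM.2.2 W hW_ne_bot hW_ne_top (isTorsionFreeMod_quotient_of_maximal_disjoint hM.2.1 hW)

/-- Over a Noetherian local ring, every simple torsion-free module is uniform:
any two nonzero submodules intersect nontrivially. -/
theorem stmt8 (R : Type) [CommRing R] [IsNoetherianRing R] [IsLocalRing R]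
    (M : Type) [AddCommGroup M] [Module R M] (hM : SimpleTorsionFree R M)
    (U V : Submodule R M) (hU : U ≠ ⊥) (hV : V ≠ ⊥) :
    U ⊓ V ≠ ⊥ :=
  stmt8_general R M hM U V hU hV
end

section
/- Let R be a Noetherian local ring. If M is a simple torsion-free R-module, then Ann_R(M) is a maximal element of Ass(R) (with respect to inclusion). -/
open scoped nonZeroDivisors

namespace Submodule

variable {R M : Type} [CommRing R] [AddCommGroup M] [Module R M]

def torsionSaturation (N : Submodule R M) : Submodule R M :=
  (torsion R (M ⧸ N)).comap N.mkQ

theorem mem_torsionSaturation {N : Submodule R M} {m : M} :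
    m ∈ N.torsionSaturation ↔ ∃ r : R⁰, r • m ∈ N := by
  simp only [torsionSaturation, mem_comap, mkQ_apply, mem_torsion_iff, ← Quotient.mk_smul,
    Quotient.mk_eq_zero]

theorem le_torsionSaturation (N : Submodule R M) : N ≤ N.torsionSaturation :=
  fun m hm ↦ mem_torsionSaturation.mpr ⟨1, by rwa [one_smul]⟩

theorem isTorsionFreeMod_quotient_torsionSaturation (N : Submodule R M) :
    IsTorsionFreeMod R (M ⧸ N.torsionSaturation) := by
  intro r x hr hrx
  obtain ⟨m, rfl⟩ := Quotient.mk_surjective _ x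
  rw [← Quotient.mk_smul, Quotient.mk_eq_zero, mem_torsionSaturation] at hrx
  obtain ⟨s, hs⟩ := hrx
  rw [Quotient.mk_eq_zero, mem_torsionSaturation]
  exact ⟨s * ⟨r, hr⟩, by rwa [Submonoid.smul_def, Submonoid.coe_mul, mul_smul]⟩

end Submodule

theorem IsTorsionFreeMod.disjoint_annihilator_nonZeroDivisors {R M : Type} [CommRing R]
    [AddCommGroup M] [Module R M] (hM : IsTorsionFreeMod R M) {x : M} (hx : x ≠ 0) :
    Disjoint (Module.annihilator R M : Set R) R⁰ :=
  Set.disjoint_left.mpr fun _ ha hr ↦ hx (hM _ x hr (Module.mem_annihilator.mp ha x))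

theorem IsAssociatedPrime.disjoint_nonZeroDivisors {R : Type} [CommRing R] [IsNoetherianRing R]
    {P : Ideal R} (hP : IsAssociatedPrime P R) : Disjoint (P : Set R) R⁰ :=
  Set.subset_compl_iff_disjoint_right.mp fun a ha ↦ by
    have : a ∈ ⋃ p ∈ associatedPrimes R R, (p : Set R) := Set.mem_biUnion hP ha
    rwa [biUnion_associatedPrimes_eq_compl_nonZeroDivisors] at this

theorem Ideal.exists_le_isAssociatedPrime_of_disjoint_nonZeroDivisors {R : Type} [CommRing R]
    [IsNoetherianRing R] {I : Ideal R} (hI : Disjoint (I : Set R) R⁰) :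
    ∃ P, IsAssociatedPrime P R ∧ I ≤ P :=
  (I.subset_union_prime_finite (associatedPrimes.finite R R) (f := id) ⊥ ⊥
    fun _ hP _ _ ↦ hP.isPrime).mp <|
    biUnion_associatedPrimes_eq_compl_nonZeroDivisors R ▸ hI.subset_compl_right

namespace SimpleTorsionFree

variable {R M : Type} [CommRing R] [AddCommGroup M] [Module R M]

theorem torsionSaturation_eq_top (hM : SimpleTorsionFree R M) {N : Submodule R M}
    (hN : N ≠ ⊥) : N.torsionSaturation = ⊤ := by
  by_contra hne
  exact hM.2.2 _ (ne_bot_of_le_ne_bot hN N.le_torsionSaturation) hne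
    N.isTorsionFreeMod_quotient_torsionSaturation

theorem exists_smul_mem (hM : SimpleTorsionFree R M) {N : Submodule R M} (hN : N ≠ ⊥)
    (m : M) : ∃ r : R⁰, r • m ∈ N :=
  Submodule.mem_torsionSaturation.mp (hM.torsionSaturation_eq_top hN ▸ Submodule.mem_top)

theorem mem_annihilator_iff_smul_eq_zero (hM : SimpleTorsionFree R M) {x : M} (hx : x ≠ 0)
    {b : R} : b ∈ Module.annihilator R M ↔ b • x = 0 := by
  refine ⟨fun hb ↦ Module.mem_annihilator.mp hb x, fun hbx ↦ Module.mem_annihilator.mpr ?_⟩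
  intro y
  obtain ⟨r, hr⟩ := hM.exists_smul_mem (N := R ∙ x) (by simpa using hx) y
  obtain ⟨a, hay⟩ := Submodule.mem_span_singleton.mp hr
  refine hM.2.1 r _ r.2 ?_
  rw [smul_comm, ← Submonoid.smul_def, ← hay, smul_comm, hbx, smul_zero]

theorem eq_annihilator_of_le (hM : SimpleTorsionFree R M) {q : Ideal R}
    (hq : Disjoint (q : Set R) R⁰) (hle : Module.annihilator R M ≤ q) :
    q = Module.annihilator R M := by
  obtain ⟨x, hx⟩ := hM.1
  refine le_antisymm (fun b hb ↦ (hM.mem_annihilator_iff_smul_eq_zero hx).mpr ?_) hle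
  by_contra hbx
  have hqx : q • (R ∙ x) ≠ ⊥ :=
    (Submodule.ne_bot_iff _).mpr ⟨_, Submodule.mem_smul_span_singleton.mpr ⟨b, hb, rfl⟩, hbx⟩
  obtain ⟨r, hr⟩ := hM.exists_smul_mem hqx x
  obtain ⟨a, ha, hax⟩ := Submodule.mem_smul_span_singleton.mp hr
  have hra : (r : R) - a ∈ Module.annihilator R M := by
    rw [hM.mem_annihilator_iff_smul_eq_zero hx, sub_smul, hax, Submonoid.smul_def, sub_self]
  have hrq : (r : R) ∈ q := by simpa using q.add_mem (hle hra) ha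
  exact Set.disjoint_left.mp hq hrq r.2

end SimpleTorsionFree

theorem stmt9_general (R : Type) [CommRing R] [IsNoetherianRing R]
    (M : Type) [AddCommGroup M] [Module R M] (hM : SimpleTorsionFree R M) :
    IsAssociatedPrime (Module.annihilator R M) R ∧
      ∀ q : Ideal R, IsAssociatedPrime q R → Module.annihilator R M ≤ q →
        q = Module.annihilator R M := by
  have hmax (q : Ideal R) (hq : IsAssociatedPrime q R) (hle : Module.annihilator R M ≤ q) :
      q = Module.annihilator R M :=
    hM.eq_annihilator_of_le hq.disjoint_nonZeroDivisors hle
  obtain ⟨x, hx⟩ := hM.1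
  obtain ⟨P, hP, hle⟩ := Ideal.exists_le_isAssociatedPrime_of_disjoint_nonZeroDivisors
    (hM.2.1.disjoint_annihilator_nonZeroDivisors hx)
  exact ⟨hmax P hP hle ▸ hP, hmax⟩

/-- If `M` is a simple torsion-free module over a Noetherian local ring `R`, then
`Ann_R(M)` is a maximal element of `Ass(R)` with respect to inclusion. -/
theorem stmt9 (R : Type) [CommRing R] [IsNoetherianRing R] [IsLocalRing R]
    (M : Type) [AddCommGroup M] [Module R M] (hM : SimpleTorsionFree R M) :
    IsAssociatedPrime (Module.annihilator R M) R ∧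
      ∀ q : Ideal R, IsAssociatedPrime q R → Module.annihilator R M ≤ q →
        q = Module.annihilator R M :=
  stmt9_general R M hM
end

section
/- Let R be a Noetherian local integral domain. An R-module M is simple torsion-free if and only if M is nonzero, torsion-free, and uniform. -/
namespace Submodule

variable {R M : Type} [CommRing R] [AddCommGroup M] [Module R M]

def torsionClosure (U : Submodule R M) : Submodule R M :=
  (torsion R (M ⧸ U)).comap U.mkQ

theorem mem_torsionClosure {U : Submodule R M} {m : M} :
    m ∈ U.torsionClosure ↔ ∃ r ∈ nonZeroDivisors R, r • m ∈ U := by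
  simp only [torsionClosure, mem_comap, mkQ_apply, mem_torsion_iff, Submonoid.smul_def,
    ← Quotient.mk_smul, Quotient.mk_eq_zero, Subtype.exists, exists_prop]

theorem le_torsionClosure (U : Submodule R M) : U ≤ U.torsionClosure :=
  fun m hm => mem_torsionClosure.mpr ⟨1, one_mem _, by rwa [one_smul]⟩

theorem isTorsionFreeMod_quotient_torsionClosure (U : Submodule R M) :
    IsTorsionFreeMod R (M ⧸ U.torsionClosure) := by
  intro r x hr hx
  obtain ⟨m, rfl⟩ := Quotient.mk_surjective _ x
  rw [← Quotient.mk_smul, Quotient.mk_eq_zero, mem_torsionClosure] at hx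
  obtain ⟨s, hs, hsrm⟩ := hx
  rw [Quotient.mk_eq_zero, mem_torsionClosure]
  exact ⟨s * r, mul_mem hs hr, by rwa [mul_smul]⟩

theorem torsionClosure_ne_top (htf : IsTorsionFreeMod R M) {U V : Submodule R M}
    (hV : V ≠ ⊥) (hUV : U ⊓ V = ⊥) : U.torsionClosure ≠ ⊤ := by
  intro h
  obtain ⟨v, hvV, hv0⟩ := exists_mem_ne_zero_of_ne_bot hV
  obtain ⟨r, hr, hrv⟩ := mem_torsionClosure.mp (h ▸ mem_top : v ∈ U.torsionClosure)
  have hrv_inf : r • v ∈ U ⊓ V := ⟨hrv, V.smul_mem r hvV⟩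
  rw [hUV, mem_bot] at hrv_inf
  exact hv0 (htf r v hr hrv_inf)

end Submodule

open Submodule

variable {R M : Type} [CommRing R] [AddCommGroup M] [Module R M]

theorem SimpleTorsionFree.inf_ne_bot (h : SimpleTorsionFree R M) {U V : Submodule R M}
    (hU : U ≠ ⊥) (hV : V ≠ ⊥) : U ⊓ V ≠ ⊥ := by
  obtain ⟨-, htf, hq⟩ := h
  intro hUV
  exact hq U.torsionClosure (ne_bot_of_le_ne_bot hU U.le_torsionClosure)
    (torsionClosure_ne_top htf hV hUV) U.isTorsionFreeMod_quotient_torsionClosure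

theorem not_isTorsionFreeMod_quotient_of_uniform [NoZeroDivisors R]
    (huni : ∀ U V : Submodule R M, U ≠ ⊥ → V ≠ ⊥ → U ⊓ V ≠ ⊥) {U : Submodule R M}
    (hU : U ≠ ⊥) (hU_top : U ≠ ⊤) : ¬ IsTorsionFreeMod R (M ⧸ U) := by
  intro htf
  obtain ⟨x, hxU⟩ : ∃ x : M, x ∉ U := by
    by_contra! h
    exact hU_top (eq_top_iff'.mpr h)
  have hspan : span R {x} ≠ ⊥ := by
    rw [Ne, span_singleton_eq_bot]
    exact fun hx => hxU (hx ▸ U.zero_mem)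
  obtain ⟨y, ⟨hyU, hyx⟩, hy0⟩ := exists_mem_ne_zero_of_ne_bot (huni U _ hU hspan)
  obtain ⟨r, rfl⟩ := mem_span_singleton.mp hyx
  have hr : r ∈ nonZeroDivisors R := mem_nonZeroDivisors_of_ne_zero fun hr => hy0 (by simp [hr])
  refine hxU ((Quotient.mk_eq_zero U).mp (htf r _ hr ?_))
  rwa [← Quotient.mk_smul, Quotient.mk_eq_zero]

theorem stmt10_general (R : Type) [CommRing R] [IsDomain R]
    (M : Type) [AddCommGroup M] [Module R M] :
    SimpleTorsionFree R M ↔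
      ((∃ x : M, x ≠ 0) ∧ IsTorsionFreeMod R M ∧
        ∀ U V : Submodule R M, U ≠ ⊥ → V ≠ ⊥ → U ⊓ V ≠ ⊥) := by
  constructor
  · intro h
    exact ⟨h.1, h.2.1, fun U V => h.inf_ne_bot⟩
  · rintro ⟨hne, htf, huni⟩
    exact ⟨hne, htf, fun U => not_isTorsionFreeMod_quotient_of_uniform huni⟩

/-- Over a Noetherian local integral domain, a module `M` is simple torsion-free
iff `M` is nonzero, torsion-free and uniform. -/
theorem stmt10 (R : Type) [CommRing R] [IsNoetherianRing R] [IsLocalRing R] [IsDomain R]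
    (M : Type) [AddCommGroup M] [Module R M] :
    SimpleTorsionFree R M ↔
      ((∃ x : M, x ≠ 0) ∧ IsTorsionFreeMod R M ∧
        ∀ U V : Submodule R M, U ≠ ⊥ → V ≠ ⊥ → U ⊓ V ≠ ⊥) :=
  stmt10_general R M
end

section
/- Let R be a Noetherian local ring. An R-module M ≠ 0 is simple torsion-free if and only if M embeds into κ(p) = R_p/(p R_p) for some maximal element p of Ass(R). -/
/-!
Let `M` be simple torsion-free. The saturation of a nonzero submodule under non-zerodivisors has
torsion-free quotient, hence is all of `M`; so for an
associated prime `p = ann u` of `M`, every `x : M` satisfies `s • x = a • u` with `s` a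
non-zerodivisor, and `x ↦ a / s` is a well-defined embedding `M ↪ κ(p)`. If `p ≤ q ∈ Ass R` and
`b ∈ q \ p`, then `s • u = c • b • u` for a non-zerodivisor `s`, forcing `s ∈ p + R b ⊆ q`, which
is impossible. Prime avoidance puts `p`, which consists of zero divisors, inside some associated
prime of `R`, so `p` is a maximal associated prime.

Conversely, if `M ↪ κ(p)` then `p` annihilates `M`, and for `U ≠ 0` with `M / U` torsion-free and
`x ∉ U` the ideal `(U : x)` consists of zero divisors, so lies in an associated prime `q ⊇ p`,
i.e. in `p`. But any `x` and `u ∈ U \ 0` satisfy `s • x = a • u` with `s ∉ p`.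
-/

section AssociatedPrimes

variable {R : Type*} [CommRing R] [IsNoetherianRing R]

theorem IsAssociatedPrime.exists_smul_eq_zero_iff {M : Type*} [AddCommGroup M] [Module R M]
    {p : Ideal R} (h : IsAssociatedPrime p M) :
    ∃ u : M, u ≠ 0 ∧ ∀ a : R, a • u = 0 ↔ a ∈ p := by
  obtain ⟨hp, u, rfl⟩ := isAssociatedPrime_iff.mp h
  refine ⟨u, fun hu => hp.ne_top ?_, fun a => by
    rw [Submodule.mem_colon_singleton, Submodule.mem_bot]⟩
  simp [hu]

theorem IsAssociatedPrime.disjoint_nonZeroDivisors_s12 {q : Ideal R} (h : IsAssociatedPrime q R) :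
    Disjoint (q : Set R) (nonZeroDivisors R) :=
  Set.subset_compl_iff_disjoint_right.mp <|
    biUnion_associatedPrimes_eq_compl_nonZeroDivisors R ▸
      Set.subset_biUnion_of_mem (u := fun p : Ideal R => (p : Set R)) h

theorem Ideal.exists_le_isAssociatedPrime_of_disjoint_nonZeroDivisors_s12 {I : Ideal R}
    (h : Disjoint (I : Set R) (nonZeroDivisors R)) : ∃ q, IsAssociatedPrime q R ∧ I ≤ q :=
  (I.subset_union_prime_finite (associatedPrimes.finite R R) (f := id) 0 0
    fun _ hq _ _ => hq.isPrime).mp <|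
      biUnion_associatedPrimes_eq_compl_nonZeroDivisors R ▸ h.subset_compl_right

end AssociatedPrimes

section ResidueField

variable {R : Type*} [CommRing R] {p : Ideal R} [p.IsPrime]

theorem Ideal.ResidueField.exists_algebraMap_mul_eq (c : p.ResidueField) :
    ∃ a, ∃ s ∉ p, algebraMap R p.ResidueField s * c = algebraMap R p.ResidueField a := by
  obtain ⟨⟨a, s, hs⟩, h⟩ := IsLocalization.surj (nonZeroDivisors (R ⧸ p)) c
  obtain ⟨a, rfl⟩ := Ideal.Quotient.mk_surjective a
  obtain ⟨s, rfl⟩ := Ideal.Quotient.mk_surjective s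
  refine ⟨a, s, fun hsp => nonZeroDivisors.ne_zero hs (Ideal.Quotient.eq_zero_iff_mem.mpr hsp), ?_⟩
  simpa [mul_comm] using h

variable {M : Type*} [AddCommGroup M] [Module R M]

theorem smul_eq_zero_of_injective_residueField {f : M →ₗ[R] p.ResidueField}
    (hf : Function.Injective f) {c : R} (hc : c ∈ p) (x : M) : c • x = 0 :=
  hf <| by rw [map_smul, Algebra.smul_def, Ideal.algebraMap_residueField_eq_zero.mpr hc,
    zero_mul, map_zero]

theorem exists_smul_eq_smul_of_injective_residueField {f : M →ₗ[R] p.ResidueField}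
    (hf : Function.Injective f) {u : M} (hu : u ≠ 0) (x : M) :
    ∃ a : R, ∃ s ∉ p, s • x = a • u := by
  have hfu : f u ≠ 0 := (map_ne_zero_iff f hf).mpr hu
  obtain ⟨a, s, hs, h⟩ := Ideal.ResidueField.exists_algebraMap_mul_eq (f x / f u)
  refine ⟨a, s, hs, hf ?_⟩
  rw [map_smul, map_smul, Algebra.smul_def, Algebra.smul_def, ← h, mul_assoc,
    div_mul_cancel₀ _ hfu]

theorem algebraMap_div_eq_of_smul_eq_smul {u : M} (hu : ∀ a : R, a • u = 0 ↔ a ∈ p) {x : M}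
    {s t a b : R} (hs : s ∉ p) (ht : t ∉ p) (hsx : s • x = a • u) (htx : t • x = b • u) :
    algebraMap R p.ResidueField a / algebraMap R p.ResidueField s =
      algebraMap R p.ResidueField b / algebraMap R p.ResidueField t := by
  have hmem : t * a - s * b ∈ p := (hu _).mp <| by
    rw [sub_smul, mul_smul, mul_smul, ← hsx, ← htx, smul_comm, sub_self]
  have h := Ideal.algebraMap_residueField_eq_zero.mpr hmem
  rw [map_sub, sub_eq_zero, map_mul, map_mul] at h
  rw [div_eq_div_iff (by simpa using hs) (by simpa using ht)]
  linear_combination h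

end ResidueField

section TorsionFree

variable {R M : Type} [CommRing R] [AddCommGroup M] [Module R M]

theorem IsTorsionFreeMod.of_injective {N : Type} [AddCommGroup N] [Module R N]
    (hN : IsTorsionFreeMod R N) {f : M →ₗ[R] N} (hf : Function.Injective f) :
    IsTorsionFreeMod R M :=
  fun r x hr hrx => hf <| by rw [map_zero]; exact hN r (f x) hr (by rw [← map_smul, hrx, map_zero])

theorem IsTorsionFreeMod.disjoint_nonZeroDivisors_s12 (htf : IsTorsionFreeMod R M) {p : Ideal R}
    {u : M} (hu0 : u ≠ 0) (hu : ∀ a : R, a • u = 0 ↔ a ∈ p) :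
    Disjoint (p : Set R) (nonZeroDivisors R) :=
  Set.disjoint_right.mpr fun s hs hsp => hu0 (htf s u hs ((hu s).mpr hsp))

theorem isTorsionFreeMod_residueField {p : Ideal R} [p.IsPrime]
    (hp : Disjoint (p : Set R) (nonZeroDivisors R)) : IsTorsionFreeMod R p.ResidueField := by
  intro r c hr hrc
  rw [Algebra.smul_def, mul_eq_zero, Ideal.algebraMap_residueField_eq_zero] at hrc
  exact hrc.resolve_left (Set.disjoint_right.mp hp hr)

theorem exists_injective_residueField {p : Ideal R} [p.IsPrime] {u : M}
    (hu : ∀ a : R, a • u = 0 ↔ a ∈ p) (htf : IsTorsionFreeMod R M)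
    (hp : Disjoint (p : Set R) (nonZeroDivisors R))
    (hdiv : ∀ x : M, ∃ s ∈ nonZeroDivisors R, ∃ a : R, s • x = a • u) :
    ∃ f : M →ₗ[R] p.ResidueField, Function.Injective f := by
  choose s hs a ha using hdiv
  have hsp : ∀ x, s x ∉ p := fun x => Set.disjoint_right.mp hp (hs x)
  set g := algebraMap R p.ResidueField
  have hg : ∀ x, g (s x) ≠ 0 := fun x => by simpa [g] using hsp x
  have key : ∀ {x : M} {t b : R}, t ∉ p → t • x = b • u → g (a x) / g (s x) = g b / g t :=
    fun ht htx => algebraMap_div_eq_of_smul_eq_smul hu (hsp _) ht (ha _) htx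
  refine ⟨
    { toFun x := g (a x) / g (s x)
      map_add' x y := ?_
      map_smul' c x := ?_ }, ?_⟩
  · have hxy : (s x * s y) • (x + y) = (s y * a x + s x * a y) • u := by
      rw [smul_add, mul_comm, mul_smul, mul_smul (s y), ha, smul_comm (s y) (s x) y, ha, smul_smul,
        smul_smul, ← add_smul]
    rw [key (‹p.IsPrime›.mul_notMem (hsp x) (hsp y)) hxy, div_add_div _ _ (hg x) (hg y)]
    simp only [map_add, map_mul]
    ring
  · have hcx : s x • c • x = (c * a x) • u := by rw [smul_comm, ha, smul_smul]
    rw [key (hsp x) hcx, map_mul, mul_div_assoc, RingHom.id_apply, Algebra.smul_def]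
  · rw [injective_iff_map_eq_zero]
    intro x hx
    have hax : g (a x) / g (s x) = 0 := hx
    rw [div_eq_zero_iff, or_iff_left (hg x), Ideal.algebraMap_residueField_eq_zero] at hax
    exact htf _ x (hs x) (by rw [ha, (hu _).mpr hax])

end TorsionFree

namespace SimpleTorsionFree

variable {R M : Type} [CommRing R] [AddCommGroup M] [Module R M]

theorem exists_smul_mem_s12 (h : SimpleTorsionFree R M) {W : Submodule R M} (hW : W ≠ ⊥) (x : M) :
    ∃ s ∈ nonZeroDivisors R, s • x ∈ W := by
  set S := (Submodule.torsion' R (M ⧸ W) (nonZeroDivisors R)).comap W.mkQ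
  have mem_S : ∀ y, y ∈ S ↔ ∃ s ∈ nonZeroDivisors R, s • y ∈ W := fun y => by
    simp [S, Submodule.mem_torsion'_iff, ← Submodule.Quotient.mk_smul,
      Submodule.Quotient.mk_eq_zero]
  have hWS : W ≤ S := fun y hy => (mem_S y).mpr ⟨1, one_mem _, by rwa [one_smul]⟩
  have hS : IsTorsionFreeMod R (M ⧸ S) := by
    intro r y hr hry
    obtain ⟨y, rfl⟩ := Submodule.Quotient.mk_surjective S y
    rw [← Submodule.Quotient.mk_smul, Submodule.Quotient.mk_eq_zero, mem_S] at hry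
    rw [Submodule.Quotient.mk_eq_zero, mem_S]
    obtain ⟨s, hs, hsy⟩ := hry
    exact ⟨s * r, mul_mem hs hr, by rwa [mul_smul]⟩
  by_contra hx
  refine h.2.2 S (fun hS0 => hW (eq_bot_iff.mpr (hS0 ▸ hWS))) (fun hStop => hx ?_) hS
  exact (mem_S x).mp (hStop ▸ Submodule.mem_top)

theorem exists_smul_eq_smul (h : SimpleTorsionFree R M) {u : M} (hu : u ≠ 0) (x : M) :
    ∃ s ∈ nonZeroDivisors R, ∃ a : R, s • x = a • u := by
  obtain ⟨s, hs, hsx⟩ := h.exists_smul_mem_s12 (W := Submodule.span R {u}) (by simpa using hu) x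
  obtain ⟨a, ha⟩ := Submodule.mem_span_singleton.mp hsx
  exact ⟨s, hs, a, ha.symm⟩

theorem eq_of_le_isAssociatedPrime [IsNoetherianRing R] (h : SimpleTorsionFree R M)
    {p q : Ideal R} {u : M} (hu : ∀ a : R, a • u = 0 ↔ a ∈ p) (hq : IsAssociatedPrime q R)
    (hpq : p ≤ q) : q = p := by
  by_contra hne
  obtain ⟨b, hbq, hbp⟩ := SetLike.exists_of_lt (lt_of_le_of_ne hpq (Ne.symm hne))
  obtain ⟨s, hs, c, hc⟩ := h.exists_smul_eq_smul (u := b • u) (fun h0 => hbp ((hu b).mp h0)) u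
  have hsq : s ∈ q := by
    have hmem : s - c * b ∈ p := (hu _).mp (by rw [sub_smul, mul_smul, hc, sub_self])
    simpa using q.add_mem (hpq hmem) (q.mul_mem_left c hbq)
  exact Set.disjoint_left.mp hq.disjoint_nonZeroDivisors_s12 hsq hs

end SimpleTorsionFree

theorem simpleTorsionFree_of_injective_residueField {R M : Type} [CommRing R] [IsNoetherianRing R]
    [AddCommGroup M] [Module R M] {p : Ideal R} [p.IsPrime] (hpR : IsAssociatedPrime p R)
    (hmax : ∀ q : Ideal R, IsAssociatedPrime q R → p ≤ q → q = p)
    {f : M →ₗ[R] p.ResidueField} (hf : Function.Injective f) (hM : ∃ x : M, x ≠ 0) :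
    SimpleTorsionFree R M := by
  refine ⟨hM, (isTorsionFreeMod_residueField hpR.disjoint_nonZeroDivisors_s12).of_injective hf,
    fun U hU hUtop hUtf => ?_⟩
  obtain ⟨u, huU, hu0⟩ := Submodule.exists_mem_ne_zero_of_ne_bot hU
  obtain ⟨x, hxU⟩ : ∃ x, x ∉ U := by
    by_contra! hall
    exact hUtop (eq_top_iff.mpr fun y _ => hall y)
  have hdisj : Disjoint (U.colon {x} : Set R) (nonZeroDivisors R) :=
    Set.disjoint_left.mpr fun r hr hnzd => hxU <| by
      rw [← Submodule.Quotient.mk_eq_zero]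
      refine hUtf r _ hnzd ?_
      rw [← Submodule.Quotient.mk_smul, Submodule.Quotient.mk_eq_zero]
      exact Submodule.mem_colon_singleton.mp hr
  obtain ⟨q, hq, hxq⟩ := Ideal.exists_le_isAssociatedPrime_of_disjoint_nonZeroDivisors_s12 hdisj
  have hpq : p ≤ q := le_trans (fun c hc => Submodule.mem_colon_singleton.mpr
    (by rw [smul_eq_zero_of_injective_residueField hf hc]; exact U.zero_mem)) hxq
  obtain ⟨a, s, hs, hsx⟩ := exists_smul_eq_smul_of_injective_residueField hf hu0 x
  exact hs (hmax q hq hpq ▸ hxq (Submodule.mem_colon_singleton.mpr (hsx ▸ U.smul_mem a huU)))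

theorem stmt12_general (R : Type) [CommRing R] [IsNoetherianRing R]
    (M : Type) [AddCommGroup M] [Module R M] (hM : ∃ x : M, x ≠ 0) :
    SimpleTorsionFree R M ↔
      ∃ (p : Ideal R) (_ : p.IsPrime),
        IsAssociatedPrime p R ∧
        (∀ q : Ideal R, IsAssociatedPrime q R → p ≤ q → q = p) ∧
        ∃ f : M →ₗ[R] IsLocalRing.ResidueField (Localization.AtPrime p),
          Function.Injective f := by
  refine ⟨fun h => ?_, fun ⟨p, _, hpR, hmax, f, hf⟩ =>
    simpleTorsionFree_of_injective_residueField hpR hmax hf hM⟩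
  obtain ⟨x, hx⟩ := h.1
  have := nontrivial_of_ne x 0 hx
  obtain ⟨p, hpM⟩ := associatedPrimes.nonempty R M
  have := hpM.isPrime
  obtain ⟨u, hu0, hu⟩ := hpM.exists_smul_eq_zero_iff
  have htf : IsTorsionFreeMod R M := h.2.1
  have hdisj := htf.disjoint_nonZeroDivisors_s12 hu0 hu
  have hmax : ∀ q : Ideal R, IsAssociatedPrime q R → p ≤ q → q = p :=
    fun q hq => h.eq_of_le_isAssociatedPrime hu hq
  obtain ⟨q, hq, hpq⟩ := Ideal.exists_le_isAssociatedPrime_of_disjoint_nonZeroDivisors_s12 hdisj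
  exact ⟨p, hpM.isPrime, hmax q hq hpq ▸ hq, hmax,
    exists_injective_residueField hu htf hdisj (h.exists_smul_eq_smul hu0)⟩

/-- Over a Noetherian local ring `R`, a module `M ≠ 0` is simple torsion-free iff
`M` embeds into `κ(p) = R_p/(p R_p)` for some maximal element `p` of `Ass(R)`. -/
theorem stmt12 (R : Type) [CommRing R] [IsNoetherianRing R] [IsLocalRing R]
    (M : Type) [AddCommGroup M] [Module R M] (hM : ∃ x : M, x ≠ 0) :
    SimpleTorsionFree R M ↔
      ∃ (p : Ideal R) (_ : p.IsPrime),
        IsAssociatedPrime p R ∧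
        (∀ q : Ideal R, IsAssociatedPrime q R → p ≤ q → q = p) ∧
        ∃ f : M →ₗ[R] IsLocalRing.ResidueField (Localization.AtPrime p),
          Function.Injective f :=
  stmt12_general R M hM
end

section
/- Let R be a Noetherian local ring and N a simple divisible R-module. If V ⊊ N is an Artinian submodule, then V is bounded (r₀V = 0 for some non-zerodivisor r₀), and there is a surjective R-module homomorphism N/V ↠ N. -/
/-- A module is divisible if `rN = N` for every non-zerodivisor `r` of `R`. -/
def IsDivisibleMod (R N : Type) [CommRing R] [AddCommGroup N] [Module R N] : Prop :=
  ∀ r ∈ nonZeroDivisors R, ∀ x : N, ∃ y : N, r • y = x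

/-- A submodule `V` is divisible if `rV = V` for every non-zerodivisor `r`. -/
def IsDivisibleSub (R : Type) {N : Type} [CommRing R] [AddCommGroup N] [Module R N]
    (V : Submodule R N) : Prop :=
  ∀ r ∈ nonZeroDivisors R, ∀ x ∈ V, ∃ y ∈ V, r • y = x

/-- `N` is simple divisible if `N ≠ 0` is divisible and no submodule `0 ≠ V ⊊ N`
is divisible. -/
def SimpleDivisible (R N : Type) [CommRing R] [AddCommGroup N] [Module R N] : Prop :=
  (∃ x : N, x ≠ 0) ∧ IsDivisibleMod R N ∧
    ∀ V : Submodule R N, V ≠ ⊥ → V ≠ ⊤ → ¬ IsDivisibleSub R V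

/-!
Among the submodules `r • V` with `r` a non-zerodivisor, the Artinian module `V` has a minimal
one, `r₀ • V`. Minimality makes `r₀ • V` divisible, so it vanishes because `N` is simple
divisible and `r₀ • V ⊆ V ≠ N`. Then `x ↦ r₀ • x` factors through `N ⧸ V`, and it is onto
because `N` is divisible.
-/

open Pointwise nonZeroDivisors

section Artinian

variable {R M : Type*} [CommRing R] [AddCommGroup M] [Module R M] [IsArtinian R M]

theorem IsArtinian.exists_mul_smul_top_eq (S : Submonoid R) :
    ∃ r₀ ∈ S, ∀ r ∈ S, (r * r₀) • (⊤ : Submodule R M) = r₀ • ⊤ := by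
  obtain ⟨_, ⟨r₀, hr₀, rfl⟩, hmin⟩ := IsArtinian.set_has_minimal
    {W : Submodule R M | ∃ r ∈ S, r • ⊤ = W} ⟨_, 1, S.one_mem, rfl⟩
  refine ⟨r₀, hr₀, fun r hr => ?_⟩
  have hle : (r * r₀) • (⊤ : Submodule R M) ≤ r₀ • ⊤ := by
    rw [mul_smul]
    exact Submodule.smul_le_self_of_tower r (r₀ • (⊤ : Submodule R M))
  exact hle.eq_of_not_lt (hmin _ ⟨r * r₀, S.mul_mem hr hr₀, rfl⟩)

theorem IsArtinian.exists_forall_exists_smul_smul_eq (S : Submonoid R) :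
    ∃ r₀ ∈ S, ∀ r ∈ S, ∀ x : M, ∃ y : M, r • r₀ • y = r₀ • x := by
  obtain ⟨r₀, hr₀, heq⟩ := IsArtinian.exists_mul_smul_top_eq (M := M) S
  refine ⟨r₀, hr₀, fun r hr x => ?_⟩
  have hx : r₀ • x ∈ (r * r₀) • (⊤ : Submodule R M) := by
    rw [heq r hr]
    exact Submodule.smul_mem_pointwise_smul x r₀ ⊤ trivial
  obtain ⟨y, -, hy⟩ := (Submodule.mem_smul_pointwise_iff_exists _ _ _).mp hx
  exact ⟨y, by rwa [← mul_smul]⟩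

end Artinian

theorem exists_surjective_quotient_of_smul_eq_zero {R N : Type*} [CommRing R] [AddCommGroup N]
    [Module R N] {r : R} (hr : ∀ y : N, ∃ z, r • z = y)
    {V : Submodule R N} (hV : ∀ x ∈ V, r • x = 0) :
    ∃ g : (N ⧸ V) →ₗ[R] N, Function.Surjective g := by
  refine ⟨V.liftQ (r • LinearMap.id) fun x hx => by simpa using hV x hx, fun y => ?_⟩
  obtain ⟨z, rfl⟩ := hr y
  exact ⟨V.mkQ z, by simp⟩

theorem SimpleDivisible.exists_smul_eq_zero_of_isArtinian {R N : Type} [CommRing R]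
    [AddCommGroup N] [Module R N] (hN : SimpleDivisible R N)
    {V : Submodule R N} (hV : V ≠ ⊤) [IsArtinian R V] :
    ∃ r₀ ∈ R⁰, ∀ x ∈ V, r₀ • x = 0 := by
  obtain ⟨r₀, hr₀, hdiv⟩ := IsArtinian.exists_forall_exists_smul_smul_eq (M := V) R⁰
  have hdivisible : IsDivisibleSub R (r₀ • V) := by
    rintro r hr _ ⟨x, hx, rfl⟩
    obtain ⟨y, hy⟩ := hdiv r hr ⟨x, hx⟩
    exact ⟨r₀ • y, Submodule.smul_mem_pointwise_smul _ _ _ y.2, congrArg Subtype.val hy⟩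
  have hne_top : r₀ • V ≠ ⊤ :=
    fun h => hV (top_le_iff.mp (h ▸ Submodule.smul_le_self_of_tower r₀ V))
  have hbot : r₀ • V = ⊥ := by
    by_contra h
    exact hN.2.2 _ h hne_top hdivisible
  exact ⟨r₀, hr₀, fun x hx => (Submodule.mem_bot R).mp
    (hbot ▸ Submodule.smul_mem_pointwise_smul x r₀ V hx)⟩

theorem stmt15_general (R : Type) [CommRing R]
    (N : Type) [AddCommGroup N] [Module R N] (hN : SimpleDivisible R N)
    (V : Submodule R N) (hV : V ≠ ⊤) (hart : IsArtinian R V) :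
    (∃ r₀ ∈ nonZeroDivisors R, ∀ x ∈ V, r₀ • x = 0) ∧
    ∃ g : (N ⧸ V) →ₗ[R] N, Function.Surjective g := by
  obtain ⟨r₀, hr₀, hkill⟩ := hN.exists_smul_eq_zero_of_isArtinian hV
  exact ⟨⟨r₀, hr₀, hkill⟩, exists_surjective_quotient_of_smul_eq_zero (hN.2.1 r₀ hr₀) hkill⟩

/-- Over a Noetherian local ring, if `N` is simple divisible and `V ⊊ N` is an
Artinian submodule, then `V` is bounded (`r₀ V = 0` for some non-zerodivisor `r₀`)
and there is a surjection `N/V ↠ N`. -/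
theorem stmt15 (R : Type) [CommRing R] [IsNoetherianRing R] [IsLocalRing R]
    (N : Type) [AddCommGroup N] [Module R N] (hN : SimpleDivisible R N)
    (V : Submodule R N) (hV : V ≠ ⊤) (hart : IsArtinian R V) :
    (∃ r₀ ∈ nonZeroDivisors R, ∀ x ∈ V, r₀ • x = 0) ∧
    ∃ g : (N ⧸ V) →ₗ[R] N, Function.Surjective g :=
  stmt15_general R N hN V hV hart
end

section
/- Let (R,m) be a Noetherian local ring, E the injective hull of R/m, and N° = Hom_R(N,E). If N° is simple torsion-free then N is simple divisible; if N° is simple divisible then N is simple torsion-free. -/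
open Pointwise

def Module.IsCogenerator (R E : Type) [CommRing R] [AddCommGroup E] [Module R E] : Prop :=
  ∀ ⦃M : Type⦄ [AddCommGroup M] [Module R M] (x : M), x ≠ 0 → ∃ f : M →ₗ[R] E, f x ≠ 0

theorem Module.isCogenerator_of_residueField_injective {R E : Type} [CommRing R]
    [IsLocalRing R] [AddCommGroup E] [Module R E] [Module.Injective R E]
    (ι : IsLocalRing.ResidueField R →ₗ[R] E) (hι : Function.Injective ι) :
    Module.IsCogenerator R E := by
  intro M _ _ x hx
  have hle : Ideal.torsionOf R M x ≤ LinearMap.ker (ι ∘ₗ Algebra.linearMap R _) := by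
    intro r hr
    have hm : r ∈ IsLocalRing.maximalIdeal R :=
      IsLocalRing.le_maximalIdeal (mt (Ideal.torsionOf_eq_top_iff R x).mp hx) hr
    simp [IsLocalRing.ResidueField.algebraMap_eq,
      (IsLocalRing.residue_eq_zero_iff r).mpr hm]
  let g : (R ∙ x) →ₗ[R] E := (Ideal.torsionOf R M x).liftQ _ hle ∘ₗ
    (Ideal.quotTorsionOfEquivSpanSingleton R M x).symm.toLinearMap
  obtain ⟨f, hf⟩ := Module.Injective.out (R ∙ x).subtype (Submodule.injective_subtype _) g
  refine ⟨f, fun h => ?_⟩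
  have hgx : g ⟨x, Submodule.mem_span_singleton_self x⟩ = ι 1 := by
    rw [← one_smul R (⟨x, _⟩ : R ∙ x), ← Ideal.quotTorsionOfEquivSpanSingleton_apply_mk]
    simp only [g, LinearMap.comp_apply, LinearEquiv.coe_coe, LinearEquiv.symm_apply_apply,
      Submodule.liftQ_apply]
    simp
  exact one_ne_zero (hι (by rw [map_zero, ← hgx, ← hf]; exact h))

namespace Submodule

variable {R N : Type} [CommRing R] [AddCommGroup N] [Module R N]
  (E : Type) [AddCommGroup E] [Module R E]

/-- `Ann_{N°}(V)`, which is `(N/V)°`. -/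
def homAnnihilator (V : Submodule R N) : Submodule R (N →ₗ[R] E) where
  carrier := {f | ∀ v ∈ V, f v = 0}
  add_mem' hf hg v hv := by simp [hf v hv, hg v hv]
  zero_mem' _ _ := rfl
  smul_mem' r f hf v hv := by simp [hf v hv]

variable {E}

theorem exists_mem_homAnnihilator_apply_ne_zero (hE : Module.IsCogenerator R E)
    {V : Submodule R N} {x : N} (hx : x ∉ V) :
    ∃ f ∈ V.homAnnihilator E, f x ≠ 0 := by
  obtain ⟨f, hf⟩ := hE (V.mkQ x) (by simpa [Quotient.mk_eq_zero] using hx)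
  exact ⟨f ∘ₗ V.mkQ, fun v hv => by simp [(Quotient.mk_eq_zero V).mpr hv], hf⟩

theorem homAnnihilator_ne_bot (hE : Module.IsCogenerator R E) {V : Submodule R N}
    (hV : V ≠ ⊤) : V.homAnnihilator E ≠ ⊥ := by
  obtain ⟨x, -, hx⟩ := SetLike.exists_of_lt (lt_top_iff_ne_top.mpr hV)
  obtain ⟨f, hfV, hfx⟩ := exists_mem_homAnnihilator_apply_ne_zero hE hx
  exact (Submodule.ne_bot_iff _).mpr ⟨f, hfV, fun h => hfx (by simp [h])⟩

theorem homAnnihilator_ne_top (hE : Module.IsCogenerator R E) {V : Submodule R N}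
    (hV : V ≠ ⊥) : V.homAnnihilator E ≠ ⊤ := by
  obtain ⟨v, hvV, hv⟩ := (Submodule.ne_bot_iff V).mp hV
  obtain ⟨f, hf⟩ := hE v hv
  exact fun h => hf ((h ▸ Submodule.mem_top : f ∈ V.homAnnihilator E) v hvV)

theorem isTorsionFreeMod_quotient_homAnnihilator {V : Submodule R N}
    (hV : IsDivisibleSub R V) : IsTorsionFreeMod R ((N →ₗ[R] E) ⧸ V.homAnnihilator E) := by
  intro r q hr hq
  obtain ⟨f, rfl⟩ := Quotient.mk_surjective _ q
  rw [← Quotient.mk_smul, Quotient.mk_eq_zero] at hq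
  rw [Quotient.mk_eq_zero]
  intro v hv
  obtain ⟨w, hwV, rfl⟩ := hV r hr v hv
  simpa using hq w hwV

theorem isDivisibleSub_homAnnihilator [Module.Injective R E] {U : Submodule R N}
    (hU : IsTorsionFreeMod R (N ⧸ U)) : IsDivisibleSub R (U.homAnnihilator E) := by
  intro r hr f hf
  have hmul : Function.Injective (DistribSMul.toLinearMap R (N ⧸ U) r) := fun a b hab =>
    sub_eq_zero.mp (hU r _ hr (by simpa [smul_sub, sub_eq_zero] using hab))
  -- extend `f̄ : N/U → E` along multiplication by `r` on `N/U`
  obtain ⟨h, hh⟩ := Module.Injective.out _ hmul (U.liftQ f fun u hu => hf u hu)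
  refine ⟨h ∘ₗ U.mkQ, fun u hu => by simp [(Quotient.mk_eq_zero U).mpr hu], ?_⟩
  ext x
  have hx := hh (U.mkQ x)
  simp only [DistribSMul.toLinearMap_apply, map_smul, mkQ_apply] at hx
  simpa using hx.trans (liftQ_apply _ _ x)

end Submodule

section MatlisDual

variable {R N : Type} [CommRing R] [AddCommGroup N] [Module R N]
  {E : Type} [AddCommGroup E] [Module R E]

theorem exists_ne_zero_of_exists_hom_ne_zero (h : ∃ f : N →ₗ[R] E, f ≠ 0) :
    ∃ x : N, x ≠ 0 := by
  obtain ⟨f, hf⟩ := h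
  by_contra! hN
  exact hf (LinearMap.ext fun x => by simp [hN x])

theorem isDivisibleMod_of_isTorsionFreeMod_hom (hE : Module.IsCogenerator R E)
    (h : IsTorsionFreeMod R (N →ₗ[R] E)) : IsDivisibleMod R N := by
  intro r hr x
  by_contra! hx
  have hxr : x ∉ r • (⊤ : Submodule R N) := by
    simpa [Submodule.mem_smul_pointwise_iff_exists] using hx
  obtain ⟨f, hf, hfx⟩ := Submodule.exists_mem_homAnnihilator_apply_ne_zero hE hxr
  have hrf : r • f = 0 := LinearMap.ext fun y => by
    simpa using hf (r • y) (Submodule.smul_mem_pointwise_smul y r ⊤ trivial)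
  exact hfx (by simp [h r f hr hrf])

theorem isTorsionFreeMod_of_isDivisibleMod_hom (hE : Module.IsCogenerator R E)
    (h : IsDivisibleMod R (N →ₗ[R] E)) : IsTorsionFreeMod R N := by
  intro r x hr hrx
  by_contra hx
  obtain ⟨f, hf⟩ := hE x hx
  obtain ⟨g, rfl⟩ := h r hr f
  exact hf (by simp [← map_smul, hrx])

theorem simpleDivisible_of_simpleTorsionFree_hom (hE : Module.IsCogenerator R E)
    (h : SimpleTorsionFree R (N →ₗ[R] E)) : SimpleDivisible R N := by
  obtain ⟨hne, htf, hsimple⟩ := h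
  refine ⟨exists_ne_zero_of_exists_hom_ne_zero hne,
    isDivisibleMod_of_isTorsionFreeMod_hom hE htf, fun V hbot htop hV => ?_⟩
  exact hsimple _ (Submodule.homAnnihilator_ne_bot hE htop)
    (Submodule.homAnnihilator_ne_top hE hbot)
    (Submodule.isTorsionFreeMod_quotient_homAnnihilator hV)

theorem simpleTorsionFree_of_simpleDivisible_hom [Module.Injective R E]
    (hE : Module.IsCogenerator R E) (h : SimpleDivisible R (N →ₗ[R] E)) :
    SimpleTorsionFree R N := by
  obtain ⟨hne, hdiv, hsimple⟩ := h
  refine ⟨exists_ne_zero_of_exists_hom_ne_zero hne,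
    isTorsionFreeMod_of_isDivisibleMod_hom hE hdiv, fun U hbot htop hU => ?_⟩
  exact hsimple _ (Submodule.homAnnihilator_ne_bot hE htop)
    (Submodule.homAnnihilator_ne_top hE hbot) (Submodule.isDivisibleSub_homAnnihilator hU)

end MatlisDual

theorem stmt16_general (R : Type) [CommRing R] [IsLocalRing R]
    (E : Type) [AddCommGroup E] [Module R E] [Module.Injective R E]
    (ι : IsLocalRing.ResidueField R →ₗ[R] E) (hι : Function.Injective ι)
    (N : Type) [AddCommGroup N] [Module R N] :
    (SimpleTorsionFree R (N →ₗ[R] E) → SimpleDivisible R N) ∧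
    (SimpleDivisible R (N →ₗ[R] E) → SimpleTorsionFree R N) :=
  have hE := Module.isCogenerator_of_residueField_injective ι hι
  ⟨simpleDivisible_of_simpleTorsionFree_hom hE, simpleTorsionFree_of_simpleDivisible_hom hE⟩

/-- Let `(R, m)` be a Noetherian local ring, `E` the injective hull of `R/m`
(an injective module containing the residue field as an essential submodule) and
`N° = Hom_R(N, E)` the Matlis dual.  If `N°` is simple torsion-free then `N` is
simple divisible; if `N°` is simple divisible then `N` is simple torsion-free. -/
theorem stmt16 (R : Type) [CommRing R] [IsNoetherianRing R] [IsLocalRing R]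
    (E : Type) [AddCommGroup E] [Module R E] [Module.Injective R E]
    (ι : IsLocalRing.ResidueField R →ₗ[R] E) (hι : Function.Injective ι)
    (hess : ∀ U : Submodule R E, U ≠ ⊥ → U ⊓ LinearMap.range ι ≠ ⊥)
    (N : Type) [AddCommGroup N] [Module R N] :
    (SimpleTorsionFree R (N →ₗ[R] E) → SimpleDivisible R N) ∧
    (SimpleDivisible R (N →ₗ[R] E) → SimpleTorsionFree R N) :=
  stmt16_general R E ι hι N
end

section
/- Let R be a Noetherian local ring with dim(R/p) = 1 for a prime p. Then κ(p) = R_p/(p R_p) is a simple socle-free R-module: κ(p) has zero socle, and for every submodule 0 ≠ U ⊊ κ(p) the quotient κ(p)/U has nonzero socle (indeed is semi-Artinian). -/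
/-!
In a local ring with `dim R/p = 1` the only primes containing `p` are `p` and `m`. An element
`t ∈ m \ p` acts on `κ(p)` as a nonzero scalar, so the socle of `κ(p)` vanishes. Given
`0 ≠ w ∈ W` and `x ∉ W`, write `x = (a / s) w` with `s ∉ p`: the annihilator of `x̄ ∈ κ(p)/W`
then contains `p` and `s`, so its radical is `m`, and as `R` is Noetherian some `m ^ n` kills
`x̄`. The last nonzero `m ^ k x̄` lies in the socle of `κ(p)/W`.
-/

open IsLocalRing

section Socle

variable {R M : Type*} [CommRing R] [AddCommGroup M] [Module R M]

theorem exists_ne_zero_forall_smul_eq_zero_of_pow_smul_eq_zero (I : Ideal R) :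
    ∀ (n : ℕ) {x : M}, x ≠ 0 → (∀ r ∈ I ^ n, r • x = 0) → ∃ y : M, y ≠ 0 ∧ ∀ r ∈ I, r • y = 0
  | 0, x, hx, h => (hx (by simpa using h 1 (by simp))).elim
  | n + 1, x, hx, h => by
    by_cases hI : ∀ r ∈ I, r • x = 0
    · exact ⟨x, hx, hI⟩
    push Not at hI
    obtain ⟨r, hr, hrx⟩ := hI
    refine exists_ne_zero_forall_smul_eq_zero_of_pow_smul_eq_zero I n hrx fun s hs => ?_
    rw [smul_smul]
    exact h _ (pow_succ I n ▸ Ideal.mul_mem_mul hs hr)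

theorem exists_ne_zero_forall_smul_eq_zero_of_le_radical_annihilator [IsNoetherianRing R]
    {I : Ideal R} {x : M} (hx : x ≠ 0) (hI : I ≤ (R ∙ x).annihilator.radical) :
    ∃ y : M, y ≠ 0 ∧ ∀ r ∈ I, r • y = 0 := by
  obtain ⟨n, hn⟩ := Ideal.exists_pow_le_of_le_radical_of_fg hI (IsNoetherian.noetherian I)
  exact exists_ne_zero_forall_smul_eq_zero_of_pow_smul_eq_zero I n hx fun r hr =>
    (Submodule.mem_annihilator_span_singleton x r).mp (hn hr)

end Socle

namespace IsLocalRing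

variable {R : Type*} [CommRing R] [IsLocalRing R] {p : Ideal R}

theorem ne_maximalIdeal_of_ringKrullDim_quotient_eq_one (hp : ringKrullDim (R ⧸ p) = 1) :
    p ≠ maximalIdeal R := by
  rintro rfl
  simp [ringKrullDim_eq_zero_of_isField ((Ideal.Quotient.maximal_ideal_iff_isField_quotient _).mp
    (maximalIdeal.isMaximal R))] at hp

theorem eq_maximalIdeal_of_lt_of_ringKrullDim_quotient_eq_one [p.IsPrime]
    (hp : ringKrullDim (R ⧸ p) = 1) {q : Ideal R} [q.IsPrime] (hpq : p < q) :
    q = maximalIdeal R := by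
  have hqm : q ≤ maximalIdeal R := le_maximalIdeal Ideal.IsPrime.ne_top'
  rw [ringKrullDim_quotient] at hp
  rcases Order.krullDim_le_one_iff.mp hp.le ⟨⟨q, ‹_›⟩, hpq.le⟩ with hmin | hmax
  · exact absurd (hmin (b := ⟨⟨p, ‹_›⟩, le_refl (p : Set R)⟩) hpq.le) hpq.not_ge
  · exact hqm.antisymm (hmax (b := ⟨⟨maximalIdeal R, inferInstance⟩, hpq.le.trans hqm⟩) hqm)

theorem maximalIdeal_le_radical_of_ringKrullDim_quotient_eq_one [p.IsPrime]
    (hp : ringKrullDim (R ⧸ p) = 1) {I : Ideal R} (hpI : p ≤ I) (hIp : ¬I ≤ p) :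
    maximalIdeal R ≤ I.radical := by
  rw [Ideal.radical_eq_sInf]
  refine le_sInf fun J ⟨hIJ, hJ⟩ => ?_
  have hpJ : p < J := (hpI.trans hIJ).lt_of_ne fun h => hIp (h ▸ hIJ)
  exact (eq_maximalIdeal_of_lt_of_ringKrullDim_quotient_eq_one hp hpJ).ge

end IsLocalRing

namespace Ideal.ResidueField

variable {R : Type*} [CommRing R] (p : Ideal R) [p.IsPrime]

theorem smul_eq_zero_iff {r : R} {x : p.ResidueField} : r • x = 0 ↔ r ∈ p ∨ x = 0 := by
  rw [Algebra.smul_def, mul_eq_zero, Ideal.algebraMap_residueField_eq_zero]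

theorem exists_smul_eq_smul (x : p.ResidueField) {w : p.ResidueField} (hw : w ≠ 0) :
    ∃ a : R, ∃ t ∉ p, t • x = a • w := by
  obtain ⟨s, hs⟩ := residue_surjective (x * w⁻¹)
  obtain ⟨a, ⟨t, ht⟩, rfl⟩ := IsLocalization.exists_mk'_eq p.primeCompl s
  refine ⟨a, t, ht, ?_⟩
  rw [Algebra.smul_def, Algebra.smul_def, ← inv_mul_cancel_right₀ hw x, ← hs, ← mul_assoc]
  congr 1
  rw [IsScalarTower.algebraMap_apply R (Localization.AtPrime p), ResidueField.algebraMap_eq,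
    ← map_mul, IsLocalization.mk'_spec'_mk, ← ResidueField.algebraMap_eq,
    ← IsScalarTower.algebraMap_apply]

end Ideal.ResidueField

/-- Let `R` be a Noetherian local ring with maximal ideal `m` and `p` a prime with
`dim(R/p) = 1`.  Then `κ(p) = R_p/(p R_p)` is a simple socle-free `R`-module:
its socle (the elements annihilated by `m`) is zero, while for every submodule
`0 ≠ U ⊊ κ(p)` the quotient `κ(p)/U` has nonzero socle — indeed it is
semi-Artinian, i.e. every nonzero quotient `κ(p)/W` (with `U ≤ W ⊊ κ(p)`) has a
nonzero element annihilated by `m`. -/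
theorem stmt19 (R : Type) [CommRing R] [IsNoetherianRing R] [IsLocalRing R]
    (p : Ideal R) [p.IsPrime] (hp : ringKrullDim (R ⧸ p) = 1) :
    (∀ x : IsLocalRing.ResidueField (Localization.AtPrime p),
        (∀ r ∈ IsLocalRing.maximalIdeal R, r • x = 0) → x = 0) ∧
    (∀ U : Submodule R (IsLocalRing.ResidueField (Localization.AtPrime p)),
      U ≠ ⊥ → U ≠ ⊤ →
      ∀ W : Submodule R (IsLocalRing.ResidueField (Localization.AtPrime p)),
        U ≤ W → W ≠ ⊤ →
        ∃ x : IsLocalRing.ResidueField (Localization.AtPrime p) ⧸ W,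
          x ≠ 0 ∧ ∀ r ∈ IsLocalRing.maximalIdeal R, r • x = 0) := by
  obtain ⟨t, htm, htp⟩ : ∃ t ∈ maximalIdeal R, t ∉ p :=
    SetLike.exists_of_lt ((le_maximalIdeal Ideal.IsPrime.ne_top').lt_of_ne
      (ne_maximalIdeal_of_ringKrullDim_quotient_eq_one hp))
  refine ⟨fun x hx => ((Ideal.ResidueField.smul_eq_zero_iff p).mp (hx t htm)).resolve_left htp,
    fun U hU _ W hUW hW => ?_⟩
  obtain ⟨w, hwU, hw⟩ := Submodule.exists_mem_ne_zero_of_ne_bot hU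
  obtain ⟨x, hxW⟩ : ∃ x, x ∉ W := by simpa [Submodule.eq_top_iff'] using hW
  obtain ⟨a, s, hsp, hsx⟩ := Ideal.ResidueField.exists_smul_eq_smul p x hw
  refine exists_ne_zero_forall_smul_eq_zero_of_le_radical_annihilator
    ((Submodule.Quotient.mk_eq_zero W).not.mpr hxW) <|
    maximalIdeal_le_radical_of_ringKrullDim_quotient_eq_one hp (fun r hr => ?_) fun h => hsp (h ?_)
  · rw [Submodule.mem_annihilator_span_singleton, ← Submodule.Quotient.mk_smul,
      (Ideal.ResidueField.smul_eq_zero_iff p).mpr (.inl hr), Submodule.Quotient.mk_zero]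
  · rw [Submodule.mem_annihilator_span_singleton, ← Submodule.Quotient.mk_smul, hsx,
      Submodule.Quotient.mk_eq_zero]
    exact W.smul_mem a (hUW hwU)
end
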